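/- arXiv:1812.02507 — 6 statements merged into one kernel-verified Lean document; each statement's English description precedes it below -/
import Mathlib

section
/- If a temporal walk from s to z contains a cycle (revisits a vertex), then deleting the edges of that cycle yields a valid temporal walk from s to z whose cost is at most the original cost, whose arrival time equals the original arrival time, and whose starting time is at least the original starting time; if all edge costs are strictly positive, the resulting cost is strictly smaller. -/
/-- A weighted temporal edge: source, destination, availability time,
traversal time, and real cost. -/
structure TEdge (V : Type) where
  src : V
  dst : V
  time : ℕ
  lam : ℕ
  cost : ℝ

variable {V : Type}

/-- Temporal compatibility of consecutive edges. -/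
def TEdge.Compat (e f : TEdge V) : Prop := e.dst = f.src ∧ e.time + e.lam ≤ f.time

/-- A temporal (s,z)-walk in the edge set `E`. -/
def IsWalk (E : Set (TEdge V)) (s z : V) (P : List (TEdge V)) : Prop :=
  P ≠ [] ∧ (∀ e ∈ P, e ∈ E) ∧ P.Chain' TEdge.Compat ∧
  (∀ e, P.head? = some e → e.src = s) ∧ (∀ e, P.getLast? = some e → e.dst = z)

/-- The sequence of vertices visited by a walk. -/
def visitedVerts (P : List (TEdge V)) : List V :=
  (P.head?.elim [] fun e => [e.src]) ++ P.map TEdge.dst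

/-- A temporal path: a simple temporal walk. -/
def IsPath (E : Set (TEdge V)) (s z : V) (P : List (TEdge V)) : Prop :=
  IsWalk E s z P ∧ (visitedVerts P).Nodup

/-- Cost of a walk. -/
noncomputable def wcost (P : List (TEdge V)) : ℝ := (P.map TEdge.cost).sum

/-- Arrival time of a walk. -/
def warr (P : List (TEdge V)) : ℕ := P.getLast?.elim 0 fun e => e.time + e.lam

/-- Starting time of a walk. -/
def wstart (P : List (TEdge V)) : ℕ := P.head?.elim 0 fun e => e.time

/-- Duration of a walk. -/
def wdur (P : List (TEdge V)) : ℕ := warr P - wstart P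

/-- `Q` dominates `P` w.r.t. cost and the temporal objective `f`. -/
def Dominates (f : List (TEdge V) → ℕ) (Q P : List (TEdge V)) : Prop :=
  (wcost Q < wcost P ∧ f Q ≤ f P) ∨ (wcost Q ≤ wcost P ∧ f Q < f P)

/-- `P` is efficient within the set `X` w.r.t. cost and objective `f`. -/
def EfficientIn (X : Set (List (TEdge V))) (f : List (TEdge V) → ℕ) (P : List (TEdge V)) : Prop :=
  P ∈ X ∧ ∀ Q ∈ X, ¬ Dominates f Q P

/-- Unlike `TEdge.Compat`, this relation is transitive, so it holds between any two edges of a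
temporal walk taken in order. -/
def TEdge.EndsBefore (e f : TEdge V) : Prop := e.time + e.lam ≤ f.time

lemma TEdge.EndsBefore.trans {e f g : TEdge V} (h₁ : e.EndsBefore f) (h₂ : f.EndsBefore g) :
    e.EndsBefore g :=
  (Nat.le_add_right_of_le h₁).trans h₂

instance : Trans (TEdge.EndsBefore (V := V)) TEdge.EndsBefore TEdge.EndsBefore :=
  ⟨TEdge.EndsBefore.trans⟩

lemma List.IsChain.pairwise_endsBefore {P : List (TEdge V)} (h : P.IsChain TEdge.Compat) :
    P.Pairwise TEdge.EndsBefore :=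
  (h.imp fun _ _ hc => hc.2).pairwise

lemma wcost_append (P Q : List (TEdge V)) : wcost (P ++ Q) = wcost P + wcost Q := by
  simp only [wcost, List.map_append, List.sum_append]

lemma wcost_nonneg {E : Set (TEdge V)} (hnn : ∀ e ∈ E, 0 ≤ e.cost) {P : List (TEdge V)}
    (hP : ∀ e ∈ P, e ∈ E) : 0 ≤ wcost P :=
  List.sum_nonneg (by simpa using fun e he => hnn e (hP e he))

lemma wcost_pos {E : Set (TEdge V)} (hpos : ∀ e ∈ E, 0 < e.cost) {P : List (TEdge V)}
    (hne : P ≠ []) (hP : ∀ e ∈ P, e ∈ E) : 0 < wcost P :=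
  List.sum_pos _ (by simpa using fun e he => hpos e (hP e he)) (by simpa using hne)

section DeleteCycle

variable {A C B : List (TEdge V)}

lemma getLast?_append_append_of_ne_nil (hB : B ≠ []) :
    (A ++ C ++ B).getLast? = (A ++ B).getLast? := by
  rw [List.getLast?_append_of_ne_nil _ hB, List.getLast?_append_of_ne_nil _ hB]

lemma exists_head?_endsBefore_of_closed (hC : C ≠ [])
    (hcyc : ∀ e f, C.head? = some e → C.getLast? = some f → e.src = f.dst)
    (h : (C ++ B).IsChain TEdge.Compat) {y : TEdge V} (hy : B.head? = some y) :
    ∃ c, C.head? = some c ∧ c.src = y.src ∧ c.EndsBefore y := by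
  have hfirst := List.head?_eq_some_head hC
  have hlast := List.getLast?_eq_some_getLast hC
  refine ⟨C.head hC, hfirst, ?_, ?_⟩
  · rw [hcyc _ _ hfirst hlast, ((List.isChain_append.1 h).2.2 _ hlast y hy).1]
  · exact (List.pairwise_append.1 h.pairwise_endsBefore).2.2 _ (List.head_mem hC) y
      (List.mem_of_head? hy)

lemma isChain_compat_of_delete_closed (hC : C ≠ [])
    (hcyc : ∀ e f, C.head? = some e → C.getLast? = some f → e.src = f.dst)
    (h : (A ++ C ++ B).IsChain TEdge.Compat) : (A ++ B).IsChain TEdge.Compat := by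
  rw [List.append_assoc] at h
  obtain ⟨hA, hCB, hAC⟩ := List.isChain_append.1 h
  refine List.isChain_append.2 ⟨hA, (List.isChain_append.1 hCB).2.1, fun x hx y hy => ?_⟩
  obtain ⟨c, hc, hsrc, hcy⟩ := exists_head?_endsBefore_of_closed hC hcyc hCB hy
  have hxc : x.Compat c := hAC x hx c (by rw [List.head?_append_of_ne_nil _ hC]; exact hc)
  exact ⟨hxc.1.trans hsrc, TEdge.EndsBefore.trans hxc.2 hcy⟩

lemma exists_head?_of_delete_closed (hC : C ≠ [])
    (hcyc : ∀ e f, C.head? = some e → C.getLast? = some f → e.src = f.dst)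
    (h : (A ++ C ++ B).IsChain TEdge.Compat) {e : TEdge V} (he : (A ++ B).head? = some e) :
    ∃ e', (A ++ C ++ B).head? = some e' ∧ e'.src = e.src ∧ e'.time ≤ e.time := by
  cases A with
  | nil =>
    obtain ⟨c, hc, hsrc, hce⟩ := exists_head?_endsBefore_of_closed hC hcyc h he
    exact ⟨c, by rw [List.nil_append, List.head?_append_of_ne_nil _ hC, hc], hsrc,
      Nat.le_of_add_right_le hce⟩
  | cons a A => exact ⟨e, he, rfl, le_rfl⟩

end DeleteCycle

/-- deleting a (non-final) cycle from a temporal walk yields a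
temporal walk with at most the cost, the same arrival time and a
later-or-equal starting time; strictly smaller cost if costs are positive. -/
theorem stmt1 (E : Set (TEdge V)) (s z : V) (A C B : List (TEdge V))
    (hC : C ≠ []) (hB : B ≠ [])
    (hcyc : ∀ e f, C.head? = some e → C.getLast? = some f → e.src = f.dst)
    (hnn : ∀ e ∈ E, 0 ≤ e.cost)
    (hW : IsWalk E s z (A ++ C ++ B)) :
    IsWalk E s z (A ++ B) ∧
    wcost (A ++ B) ≤ wcost (A ++ C ++ B) ∧
    warr (A ++ B) = warr (A ++ C ++ B) ∧
    wstart (A ++ C ++ B) ≤ wstart (A ++ B) ∧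
    ((∀ e ∈ E, 0 < e.cost) → wcost (A ++ B) < wcost (A ++ C ++ B)) := by
  obtain ⟨-, hmem, hchain, hhead, hlast⟩ := hW
  have hAB : A ++ B ≠ [] := List.append_ne_nil_of_right_ne_nil A hB
  have hCE : ∀ e ∈ C, e ∈ E := fun e he =>
    hmem e (List.mem_append_left B (List.mem_append_right A he))
  have hcost : wcost (A ++ C ++ B) = wcost (A ++ B) + wcost C := by
    simp only [wcost_append]; ring
  have hwalk : IsWalk E s z (A ++ B) := by
    have hsub : A ++ B ⊆ A ++ C ++ B :=
      (List.append_assoc A C B ▸ (List.sublist_append_right C B).append_left A).subset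
    refine ⟨hAB, fun e he => hmem e (hsub he), isChain_compat_of_delete_closed hC hcyc hchain,
      fun e he => ?_, fun e he => hlast e (by rwa [getLast?_append_append_of_ne_nil hB])⟩
    obtain ⟨e', he', hsrc, -⟩ := exists_head?_of_delete_closed hC hcyc hchain he
    exact hsrc ▸ hhead e' he'
  refine ⟨hwalk, ?_, ?_, ?_, fun hpos => ?_⟩
  · linarith [wcost_nonneg hnn hCE]
  · simp only [warr, getLast?_append_append_of_ne_nil hB]
  · obtain ⟨e', he', -, hstart⟩ :=
      exists_head?_of_delete_closed hC hcyc hchain (List.head?_eq_some_head hAB)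
    simpa only [wstart, List.head?_eq_some_head hAB, he', Option.elim] using hstart
  · linarith [wcost_pos hpos hC hCE]
end

section
/- Let G=(V,E) be a weighted temporal graph, s,z∈V, and let G' be obtained from G by adding a new source vertex s' and the edge e_0=(s',s,0,0,0). The map g that prepends e_0 to an (s,z)-path is a bijection from (s,z)-paths in G to (s',z)-paths in G', and a path P is efficient with respect to cost and arrival time in G if and only if g(P) is efficient with respect to cost and duration in G'. -/
variable {V : Type}

/-!
Every path of `G'` from the new source `s'` must leave `s'` through `e₀`, the only edge incident
to `s'`, so prepending `e₀` matches the `(s,z)`-paths of `G` with the `(s',z)`-paths of `G'`.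
The edge `e₀` costs nothing and makes every path of `G'` start at time `0`, so the cost is
preserved and the duration of `e₀ :: P` is the arrival time of `P`; efficiency, which only
compares these two values, is therefore transported along the bijection.
-/

section Paths

variable {E : Set (TEdge V)} {s z : V}

lemma visitedVerts_cons (e : TEdge V) (P : List (TEdge V)) :
    visitedVerts (e :: P) = e.src :: (e :: P).map TEdge.dst := rfl

lemma exists_mem_of_mem_visitedVerts {v : V} {P : List (TEdge V)} (hv : v ∈ visitedVerts P) :
    ∃ e ∈ P, e.src = v ∨ e.dst = v := by
  cases P with
  | nil => simp [visitedVerts] at hv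
  | cons f l =>
    rw [visitedVerts_cons, List.mem_cons, List.mem_map] at hv
    rcases hv with rfl | ⟨e, he, rfl⟩
    · exact ⟨f, List.mem_cons_self, Or.inl rfl⟩
    · exact ⟨e, he, Or.inr rfl⟩

lemma IsPath.ne_nil {P : List (TEdge V)} (hP : IsPath E s z P) : P ≠ [] := hP.1.1

lemma IsPath.mem_edgeSet {P : List (TEdge V)} (hP : IsPath E s z P) {e : TEdge V} (he : e ∈ P) :
    e ∈ E :=
  hP.1.2.1 e he

lemma IsPath.head_src {e : TEdge V} {l : List (TEdge V)} (hP : IsPath E s z (e :: l)) :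
    e.src = s :=
  hP.1.2.2.2.1 e rfl

lemma IsPath.mono {F : Set (TEdge V)} (hEF : E ⊆ F) {P : List (TEdge V)} (hP : IsPath E s z P) :
    IsPath F s z P :=
  ⟨⟨hP.1.1, fun _ he => hEF (hP.mem_edgeSet he), hP.1.2.2⟩, hP.2⟩

lemma isPath_insert_iff {e : TEdge V} {P : List (TEdge V)} (he : e ∉ P) :
    IsPath (insert e E) s z P ↔ IsPath E s z P := by
  refine ⟨fun hP => ⟨⟨hP.1.1, fun f hf => ?_, hP.1.2.2⟩, hP.2⟩, IsPath.mono (Set.subset_insert e E)⟩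
  exact (Set.mem_insert_iff.1 (hP.mem_edgeSet hf)).resolve_left (fun hfe => he (hfe ▸ hf))

lemma IsPath.dst_ne_start {P : List (TEdge V)} (hP : IsPath E s z P) {e : TEdge V} (he : e ∈ P) :
    e.dst ≠ s := by
  obtain ⟨⟨-, -, -, hhead, -⟩, hnd⟩ := hP
  cases P with
  | nil => simp at he
  | cons f l =>
    rw [visitedVerts_cons, hhead f rfl, List.nodup_cons] at hnd
    exact fun hes => hnd.1 (List.mem_map.2 ⟨e, he, hes⟩)

lemma isPath_cons_cons_iff {e f : TEdge V} {l : List (TEdge V)} :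
    IsPath E s z (e :: f :: l) ↔
      e ∈ E ∧ e.src = s ∧ e.Compat f ∧ IsPath E f.src z (f :: l) ∧ s ∉ visitedVerts (f :: l) := by
  have hvisit (h : e.dst = f.src) : visitedVerts (e :: f :: l) = e.src :: visitedVerts (f :: l) := by
    rw [visitedVerts_cons, visitedVerts_cons, List.map_cons, h]
  constructor
  · rintro ⟨⟨-, hE, hch, hhead, hlast⟩, hnd⟩
    rw [List.Chain', List.isChain_cons_cons] at hch
    rw [hvisit hch.1.1, hhead e rfl, List.nodup_cons] at hnd
    refine ⟨hE e List.mem_cons_self, hhead e rfl, hch.1, ⟨⟨List.cons_ne_nil f l,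
      fun g hg => hE g (List.mem_cons_of_mem e hg), hch.2, ?_, ?_⟩, hnd.2⟩, hnd.1⟩
    · rintro g ⟨⟩
      rfl
    · exact fun g hg => hlast g (by rwa [List.getLast?_cons_cons])
  · rintro ⟨he, rfl, hc, ⟨⟨-, hE, hch, -, hlast⟩, hnd⟩, hs⟩
    refine ⟨⟨List.cons_ne_nil e (f :: l), ?_, ?_, ?_, ?_⟩, ?_⟩
    · intro g hg
      rcases List.mem_cons.1 hg with rfl | hg
      exacts [he, hE g hg]
    · exact List.isChain_cons_cons.2 ⟨hc, hch⟩
    · rintro g ⟨⟩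
      rfl
    · exact fun g hg => hlast g (by rwa [List.getLast?_cons_cons] at hg)
    · rw [hvisit hc.1]
      exact List.nodup_cons.2 ⟨hs, hnd⟩

end Paths

section NewSource

variable {E : Set (TEdge V)} {s z s' : V}

lemma IsPath.exists_eq_cons_of_insert {e₀ : TEdge V} (hs' : ∀ e ∈ E, e.src ≠ s')
    {Q : List (TEdge V)} (hQ : IsPath (insert e₀ E) s' z Q) : ∃ P, Q = e₀ :: P := by
  cases Q with
  | nil => exact absurd rfl hQ.ne_nil
  | cons b P =>
    rcases Set.mem_insert_iff.1 (hQ.mem_edgeSet List.mem_cons_self) with rfl | hb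
    · exact ⟨P, rfl⟩
    · exact absurd hQ.head_src (hs' b hb)

lemma isPath_insert_source_cons_iff (hs' : ∀ e ∈ E, e.src ≠ s' ∧ e.dst ≠ s') (hsz : s ≠ z)
    {P : List (TEdge V)} :
    IsPath (insert ⟨s', s, 0, 0, 0⟩ E) s' z (⟨s', s, 0, 0, 0⟩ :: P) ↔ IsPath E s z P := by
  cases P with
  | nil => exact iff_of_false (fun h => hsz (h.1.2.2.2.2 _ rfl)) (fun h => h.ne_nil rfl)
  | cons f l =>
    rw [isPath_cons_cons_iff]
    constructor
    · rintro ⟨-, -, ⟨hsf, -⟩, hP, -⟩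
      obtain rfl : s = f.src := hsf
      exact (isPath_insert_iff fun h₀ => hP.dst_ne_start h₀ rfl).1 hP
    · intro hP
      obtain rfl : f.src = s := hP.head_src
      refine ⟨Set.mem_insert _ E, rfl, ⟨rfl, Nat.zero_le _⟩, hP.mono (Set.subset_insert _ E),
        fun hmem => ?_⟩
      obtain ⟨e, he, hv⟩ := exists_mem_of_mem_visitedVerts hmem
      have hne := hs' e (hP.mem_edgeSet he)
      exact hv.elim hne.1 hne.2

end NewSource

lemma wcost_cons (e : TEdge V) (P : List (TEdge V)) :
    wcost (e :: P) = e.cost + wcost P := by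
  simp [wcost]

lemma warr_cons_of_ne_nil (e : TEdge V) {P : List (TEdge V)} (hP : P ≠ []) :
    warr (e :: P) = warr P := by
  obtain ⟨f, l, rfl⟩ := List.exists_cons_of_ne_nil hP
  simp only [warr, List.getLast?_cons_cons]

lemma wstart_cons (e : TEdge V) (P : List (TEdge V)) : wstart (e :: P) = e.time := rfl

lemma efficientIn_image_iff {X Y : Set (List (TEdge V))} {f f' : List (TEdge V) → ℕ}
    {g : List (TEdge V) → List (TEdge V)} (hmaps : Set.MapsTo g X Y) (hsurj : Set.SurjOn g X Y)
    (hcost : ∀ P ∈ X, wcost (g P) = wcost P) (hobj : ∀ P ∈ X, f' (g P) = f P)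
    {P : List (TEdge V)} (hP : P ∈ X) :
    EfficientIn Y f' (g P) ↔ EfficientIn X f P := by
  have hdom : ∀ Q ∈ X, Dominates f' (g Q) (g P) ↔ Dominates f Q P := fun Q hQ => by
    rw [Dominates, Dominates, hcost Q hQ, hcost P hP, hobj Q hQ, hobj P hP]
  constructor
  · exact fun ⟨_, hY⟩ => ⟨hP, fun Q hQ => (hdom Q hQ).not.1 (hY (g Q) (hmaps hQ))⟩
  · refine fun ⟨_, hX⟩ => ⟨hmaps hP, fun Q hQ => ?_⟩
    obtain ⟨R, hR, rfl⟩ := hsurj hQ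
    exact (hdom R hR).not.2 (hX R hR)

theorem stmt2_general (E : Set (TEdge V)) (s z s' : V)
    (hs' : ∀ e ∈ E, e.src ≠ s' ∧ e.dst ≠ s')
    (hsz : s ≠ z) :
    let e0 : TEdge V := ⟨s', s, 0, 0, 0⟩
    let E' : Set (TEdge V) := insert e0 E
    Set.BijOn (fun P => e0 :: P) {P | IsPath E s z P} {Q | IsPath E' s' z Q} ∧
    ∀ P, IsPath E s z P →
      (EfficientIn {Q | IsPath E s z Q} warr P ↔
        EfficientIn {Q | IsPath E' s' z Q} wdur (e0 :: P)) := by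
  intro e0 E'
  have hpath (P : List (TEdge V)) : IsPath E' s' z (e0 :: P) ↔ IsPath E s z P :=
    isPath_insert_source_cons_iff hs' hsz
  have hbij : Set.BijOn (fun P => e0 :: P) {P | IsPath E s z P} {Q | IsPath E' s' z Q} := by
    refine ⟨fun P hP => (hpath P).2 hP, List.cons_injective.injOn, fun Q hQ => ?_⟩
    obtain ⟨P, rfl⟩ := IsPath.exists_eq_cons_of_insert (fun e he => (hs' e he).1) hQ
    exact ⟨P, (hpath P).1 hQ, rfl⟩
  refine ⟨hbij, fun P hP => (efficientIn_image_iff hbij.mapsTo hbij.surjOn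
    (fun Q _ => ?_) (fun Q hQ => ?_) hP).symm⟩
  · exact (wcost_cons e0 Q).trans (zero_add _)
  · rw [wdur, warr_cons_of_ne_nil e0 (IsPath.ne_nil hQ), wstart_cons, Nat.sub_zero]

/-- prepending the new edge e₀ = (s',s,0,0,0) is a bijection from
(s,z)-paths of G to (s',z)-paths of G', and P is efficient w.r.t. (arrival, cost)
in G iff g(P) is efficient w.r.t. (duration, cost) in G'. -/
theorem stmt2 (E : Set (TEdge V)) (s z s' : V)
    (hs' : ∀ e ∈ E, e.src ≠ s' ∧ e.dst ≠ s') (hss : s' ≠ s) (hs'z : s' ≠ z)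
    (hsz : s ≠ z) :
    let e0 : TEdge V := ⟨s', s, 0, 0, 0⟩
    let E' : Set (TEdge V) := insert e0 E
    Set.BijOn (fun P => e0 :: P) {P | IsPath E s z P} {Q | IsPath E' s' z Q} ∧
    ∀ P, IsPath E s z P →
      (EfficientIn {Q | IsPath E s z Q} warr P ↔
        EfficientIn {Q | IsPath E' s' z Q} wdur (e0 :: P)) :=
  stmt2_general E s z s' hs' hsz
end

section
/- For the bicriteria objective (duration, cost), the number of nondominated points in the objective space of (s,z)-paths is at most S·|δ⁻(z)| ≤ m², where S is the number of distinct availability times of edges leaving s and m is the number of temporal edges. -/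
variable {V : Type}

/-- Domination of points in the (temporal value, cost) objective space. -/
def PDom (p q : ℕ × ℝ) : Prop := (p.1 ≤ q.1 ∧ p.2 < q.2) ∨ (p.1 < q.1 ∧ p.2 ≤ q.2)

/-!
A nondominated point is determined by its duration: two nondominated points with equal durations
cannot have different costs, since the cheaper one would dominate the other. The duration of an
`(s,z)`-walk depends only on the availability time of its first edge, which leaves `s`, and on its
last edge, which enters `z`; so there are at most `S · |δ⁻(z)|` durations, hence at most that many
nondominated points.
-/

def paretoFront (Y : Set (ℕ × ℝ)) : Set (ℕ × ℝ) := {p ∈ Y | ∀ q ∈ Y, ¬ PDom q p}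

theorem injOn_fst_paretoFront (Y : Set (ℕ × ℝ)) : Set.InjOn Prod.fst (paretoFront Y) := by
  rintro p ⟨hpY, hp⟩ q ⟨hqY, hq⟩ hfst
  by_contra hne
  have hcost : p.2 ≠ q.2 := fun h => hne (Prod.ext hfst h)
  rcases hcost.lt_or_gt with h | h
  · exact hq p hpY (Or.inl ⟨hfst.le, h⟩)
  · exact hp q hqY (Or.inl ⟨hfst.ge, h⟩)

theorem ncard_paretoFront_le (Y : Set (ℕ × ℝ)) (hY : (Prod.fst '' Y).Finite) :
    (paretoFront Y).ncard ≤ (Prod.fst '' Y).ncard :=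
  Set.ncard_le_ncard_of_injOn Prod.fst (fun _ hp => Set.mem_image_of_mem _ hp.1)
    (injOn_fst_paretoFront Y) hY

/-- The duration of a walk that starts at time `x.1` and ends with the edge `x.2`. -/
def durationOf (x : ℕ × TEdge V) : ℕ := x.2.time + x.2.lam - x.1

theorem IsWalk.wdur_mem_image {E : Set (TEdge V)} {s z : V} {P : List (TEdge V)}
    (hP : IsWalk E s z P) :
    wdur P ∈ durationOf '' (TEdge.time '' {e ∈ E | e.src = s}) ×ˢ {e ∈ E | e.dst = z} := by
  obtain ⟨hne, hmem, -, hsrc, hdst⟩ := hP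
  have hhead := List.head?_eq_some_head hne
  have hlast := List.getLast?_eq_some_getLast hne
  refine ⟨(wstart P, P.getLast hne), ⟨?_, ?_⟩, ?_⟩
  · exact ⟨P.head hne, ⟨hmem _ (List.head_mem hne), hsrc _ hhead⟩, by simp [wstart, hhead]⟩
  · exact ⟨hmem _ (List.getLast_mem hne), hdst _ hlast⟩
  · simp [durationOf, wdur, warr, hlast]

/-- for the (duration, cost) objective, the number of
nondominated points is at most S·|δ⁻(z)| ≤ m², where S is the number of
distinct availability times of edges leaving s. -/
theorem stmt6 (E : Set (TEdge V)) (hE : E.Finite) (s z : V) :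
    let Y : Set (ℕ × ℝ) := (fun P => (wdur P, wcost P)) '' {P | IsPath E s z P}
    {p ∈ Y | ∀ q ∈ Y, ¬ PDom q p}.ncard ≤
      (TEdge.time '' {e ∈ E | e.src = s}).ncard * {e ∈ E | e.dst = z}.ncard ∧
    (TEdge.time '' {e ∈ E | e.src = s}).ncard * {e ∈ E | e.dst = z}.ncard ≤
      E.ncard * E.ncard := by
  intro Y
  set K := (TEdge.time '' {e ∈ E | e.src = s}) ×ˢ {e ∈ E | e.dst = z}
  have hK : K.Finite :=
    ((hE.subset fun _ he => he.1).image _).prod (hE.subset fun _ he => he.1)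
  have hdur : Prod.fst '' Y ⊆ durationOf '' K := by
    rintro _ ⟨_, ⟨P, hP, rfl⟩, rfl⟩
    exact hP.1.wdur_mem_image
  refine ⟨?_, Nat.mul_le_mul ?_ ?_⟩
  · calc (paretoFront Y).ncard ≤ (Prod.fst '' Y).ncard :=
          ncard_paretoFront_le Y ((hK.image _).subset hdur)
      _ ≤ (durationOf '' K).ncard := Set.ncard_le_ncard hdur (hK.image _)
      _ ≤ K.ncard := Set.ncard_image_le hK
      _ = _ := Set.ncard_prod
  · calc _ ≤ {e ∈ E | e.src = s}.ncard := Set.ncard_image_le (hE.subset fun _ he => he.1)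
      _ ≤ E.ncard := Set.ncard_le_ncard (fun _ he => he.1) hE
  · exact Set.ncard_le_ncard (fun _ he => he.1) hE
end

section
/- The duration of any temporal (s,z)-path takes at most S·|δ⁻(z)| distinct values, where S is the number of distinct availability times of edges leaving s and |δ⁻(z)| the in-degree of z. -/
variable {V : Type}

theorem Set.ncard_image2_le {α β γ : Type*} (f : α → β → γ) {s : Set α} {t : Set β}
    (hs : s.Finite) (ht : t.Finite) : (Set.image2 f s t).ncard ≤ s.ncard * t.ncard := by
  rw [← Set.image_uncurry_prod, ← Set.ncard_prod]
  exact Set.ncard_image_le (hs.prod ht)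

theorem IsWalk.wdur_mem_image2 {E : Set (TEdge V)} {s z : V} {P : List (TEdge V)}
    (hP : IsWalk E s z P) :
    wdur P ∈ Set.image2 (fun t (e : TEdge V) => e.time + e.lam - t)
      (TEdge.time '' {e ∈ E | e.src = s}) {e ∈ E | e.dst = z} := by
  obtain ⟨hne, hmem, -, hhead, hlast⟩ := hP
  have hfirst : P.head? = some (P.head hne) := List.head?_eq_some_head hne
  have hfinal : P.getLast? = some (P.getLast hne) := List.getLast?_eq_some_getLast hne
  refine ⟨_, ⟨P.head hne, ⟨hmem _ (List.head_mem hne), hhead _ hfirst⟩, rfl⟩,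
    P.getLast hne, ⟨hmem _ (List.getLast_mem hne), hlast _ hfinal⟩, ?_⟩
  simp only [wdur, warr, wstart, hfirst, hfinal, Option.elim]

/-- the duration of (s,z)-paths takes at most S·|δ⁻(z)| distinct
values, where S is the number of distinct availability times of edges leaving s. -/
theorem stmt7 (E : Set (TEdge V)) (hE : E.Finite) (s z : V) :
    ((fun P => wdur P) '' {P | IsPath E s z P}).ncard ≤
      (TEdge.time '' {e ∈ E | e.src = s}).ncard * {e ∈ E | e.dst = z}.ncard := by
  have hstart : (TEdge.time '' {e ∈ E | e.src = s}).Finite := (hE.sep _).image _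
  calc ((fun P => wdur P) '' {P | IsPath E s z P}).ncard
      ≤ (Set.image2 (fun t (e : TEdge V) => e.time + e.lam - t)
          (TEdge.time '' {e ∈ E | e.src = s}) {e ∈ E | e.dst = z}).ncard := by
        refine Set.ncard_le_ncard ?_ (hstart.image2 _ (hE.sep _))
        rintro _ ⟨P, hP, rfl⟩
        exact hP.1.wdur_mem_image2
    _ ≤ _ := Set.ncard_image2_le _ hstart (hE.sep _)
end

section
/- Domination of prefixes is not sufficient for pruning: there exists a weighted temporal graph with vertices s,u,z and paths P¹,P² from s to u such that d(P¹)≤d(P²) and c(P¹)<c(P²) (P¹ dominates P²), yet P² is the prefix of the unique efficient (s,z)-path and P¹ extends to no (s,z)-path at all. -/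
variable {V : Type}

/-!
Take `s, u, z = 0, 1, 2`. The edge `(s,u,5,5,5)` arrives at `10`, after the only edge
`(u,z,8,1,1)` out of `u` has left, so the only compatible pair of edges is `(s,u,1,6,6)` followed
by `(u,z,8,1,1)`.
Hence this pair is the only temporal `(s,z)`-walk, so it is trivially the unique efficient
`(s,z)`-path, while `P¹ = [(s,u,5,5,5)]` is no prefix of it.
-/

section Paths

variable {E : Set (TEdge V)}

lemma isPath_singleton {e : TEdge V} (he : e ∈ E) (hne : e.src ≠ e.dst) :
    IsPath E e.src e.dst [e] :=
  ⟨⟨List.cons_ne_nil _ _, by simpa using he, List.isChain_singleton _,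
    by simp, by simp⟩, by simpa [visitedVerts] using hne⟩

lemma isPath_pair {e f : TEdge V} (he : e ∈ E) (hf : f ∈ E) (hef : e.Compat f)
    (hnd : [e.src, e.dst, f.dst].Nodup) : IsPath E e.src f.dst [e, f] := by
  refine ⟨⟨List.cons_ne_nil _ _, ?_, List.isChain_pair.mpr hef, by simp, by simp⟩, ?_⟩
  · simpa using ⟨he, hf⟩
  · simpa [visitedVerts] using hnd

end Paths

lemma Dominates.irrefl (f : List (TEdge V) → ℕ) (P : List (TEdge V)) : ¬ Dominates f P P := by
  simp [Dominates]

lemma efficientIn_singleton_iff {f : List (TEdge V) → ℕ} {P Q : List (TEdge V)} :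
    EfficientIn {Q} f P ↔ P = Q := by
  refine ⟨fun h => h.1, ?_⟩
  rintro rfl
  exact ⟨rfl, fun R hR => hR ▸ Dominates.irrefl f P⟩

namespace PruningCounterexample

def e₁ : TEdge ℕ := ⟨0, 1, 5, 5, 5⟩
def e₂ : TEdge ℕ := ⟨0, 1, 1, 6, 6⟩
def e₃ : TEdge ℕ := ⟨1, 2, 8, 1, 1⟩

def graph : Set (TEdge ℕ) := {e₁, e₂, e₃}

lemma compat_iff {a b : TEdge ℕ} (ha : a ∈ graph) (hb : b ∈ graph) :
    a.Compat b ↔ a = e₂ ∧ b = e₃ := by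
  rcases ha with rfl | rfl | rfl <;> rcases hb with rfl | rfl | rfl <;>
    simp [TEdge.Compat, e₁, e₂, e₃]

lemma eq_of_isWalk {P : List (TEdge ℕ)} (h : IsWalk graph 0 2 P) : P = [e₂, e₃] := by
  obtain ⟨hne, hmem, hchain, hsrc, hdst⟩ := h
  match P with
  | [] => exact absurd rfl hne
  | [a] =>
    rcases hmem a (by simp) with rfl | rfl | rfl <;>
      simp [e₁, e₂, e₃] at hsrc hdst
  | [a, b] =>
    obtain ⟨rfl, rfl⟩ :=
      (compat_iff (hmem a (by simp)) (hmem b (by simp))).1 (List.isChain_pair.1 hchain)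
    rfl
  | a :: b :: c :: _ =>
    obtain ⟨hab, hbc, -⟩ :=
      List.isChain_cons_cons.1 hchain |>.imp_right List.isChain_cons_cons.1
    have hb : b ∈ graph := hmem b (by simp)
    have hb₃ : b = e₃ := ((compat_iff (hmem a (by simp)) hb).1 hab).2
    have hb₂ : b = e₂ := ((compat_iff hb (hmem c (by simp))).1 hbc).1
    exact absurd (hb₃.symm.trans hb₂) (by simp [e₂, e₃])

lemma isPath_iff (P : List (TEdge ℕ)) : IsPath graph 0 2 P ↔ P = [e₂, e₃] := by
  refine ⟨fun h => eq_of_isWalk h.1, ?_⟩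
  rintro rfl
  exact isPath_pair (by simp [graph]) (by simp [graph])
    ((compat_iff (by simp [graph]) (by simp [graph])).2 ⟨rfl, rfl⟩) (by simp [e₂, e₃])

end PruningCounterexample

open PruningCounterexample in
/-- domination of prefixes does not allow pruning: there is a
temporal graph with (s,u)-paths P¹ dominating P² w.r.t. (duration, cost), yet
P² is the prefix of the unique efficient (s,z)-path and P¹ extends to no
(s,z)-path. -/
theorem stmt10 : ∃ (E : Set (TEdge ℕ)) (s u z : ℕ) (P1 P2 : List (TEdge ℕ)),
    IsPath E s u P1 ∧ IsPath E s u P2 ∧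
    wdur P1 ≤ wdur P2 ∧ wcost P1 < wcost P2 ∧
    (∃! Q, EfficientIn {W | IsPath E s z W} wdur Q) ∧
    (∀ Q, EfficientIn {W | IsPath E s z W} wdur Q → ∃ R, Q = P2 ++ R) ∧
    (∀ R, ¬ IsPath E s z (P1 ++ R)) := by
  have hpaths : {W | IsPath graph 0 2 W} = {[e₂, e₃]} := Set.ext isPath_iff
  refine ⟨graph, 0, 1, 2, [e₁], [e₂], isPath_singleton (by simp [graph]) (by simp [e₁]),
    isPath_singleton (by simp [graph]) (by simp [e₂]), by decide, by norm_num [wcost, e₁, e₂],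
    ?_, ?_, ?_⟩
  · simp only [hpaths, efficientIn_singleton_iff]
    exact existsUnique_eq
  · intro Q hQ
    rw [hpaths, efficientIn_singleton_iff] at hQ
    exact ⟨[e₃], hQ⟩
  · intro R hR
    simpa [e₁, e₂] using (isPath_iff _).1 hR
end

section
/- A prefix of an efficient temporal path need not be efficient: there exists a weighted temporal graph with an (s,z)-path P* that is efficient with respect to both (arrival time, cost) and (duration, cost), whose prefix P¹ from s to the intermediate vertex w is not efficient with respect to (arrival time, cost) among (s,w)-paths. -/
variable {V : Type}

section Walks

variable {E : Set (TEdge V)} {s z : V} {e f : TEdge V} {P : List (TEdge V)}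

theorem isWalk_iff : IsWalk E s z P ↔ P ≠ [] ∧ (∀ e ∈ P, e ∈ E) ∧ P.IsChain TEdge.Compat ∧
    (∀ e, P.head? = some e → e.src = s) ∧ (∀ e, P.getLast? = some e → e.dst = z) :=
  Iff.rfl

theorem isWalk_singleton_iff : IsWalk E s z [e] ↔ e ∈ E ∧ e.src = s ∧ e.dst = z := by
  simp [isWalk_iff]

theorem isWalk_cons_cons_iff :
    IsWalk E s z (e :: f :: P) ↔ e ∈ E ∧ e.src = s ∧ e.Compat f ∧ IsWalk E f.src z (f :: P) := by
  simp only [isWalk_iff, List.isChain_cons_cons, List.getLast?_cons_cons, List.mem_cons,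
    List.head?_cons, Option.some.injEq, forall_eq', forall_eq_or_imp]
  grind

theorem efficientIn_of_forall_le {X : Set (List (TEdge V))} {obj : List (TEdge V) → ℕ}
    (hP : P ∈ X) (hle : ∀ Q ∈ X, wcost P ≤ wcost Q ∧ obj P ≤ obj Q) : EfficientIn X obj P := by
  refine ⟨hP, fun Q hQ hdom => ?_⟩
  obtain ⟨hc, ho⟩ := hle Q hQ
  rcases hdom with ⟨hc', -⟩ | ⟨-, ho'⟩ <;> order

end Walks

-- The vertices s, u, v, w, z are 0, 1, 2, 3, 4.
def esu : TEdge ℕ := ⟨0, 1, 1, 1, 1⟩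
def euw : TEdge ℕ := ⟨1, 3, 2, 1, 1⟩
def esw : TEdge ℕ := ⟨0, 3, 2, 3, 2⟩
def esv : TEdge ℕ := ⟨0, 2, 5, 1, 1⟩
def evw : TEdge ℕ := ⟨2, 3, 6, 1, 1⟩
def ewz : TEdge ℕ := ⟨3, 4, 5, 1, 1⟩

def witnessGraph : Set (TEdge ℕ) := {esu, euw, esw, esv, evw, ewz}

namespace witnessGraph

theorem compat_iff {e f : TEdge ℕ} (he : e ∈ witnessGraph) (hf : f ∈ witnessGraph) :
    e.Compat f ↔
      e = esu ∧ f = euw ∨ e = euw ∧ f = ewz ∨ e = esw ∧ f = ewz ∨ e = esv ∧ f = evw := by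
  simp only [witnessGraph, Set.mem_insert_iff, Set.mem_singleton_iff] at he hf
  rcases he with rfl | rfl | rfl | rfl | rfl | rfl <;>
    rcases hf with rfl | rfl | rfl | rfl | rfl | rfl <;>
    simp [TEdge.Compat, esu, euw, esw, esv, evw, ewz]

theorem isPath_esw_ewz : IsPath witnessGraph 0 4 [esw, ewz] := by
  simp [IsPath, isWalk_cons_cons_iff, isWalk_singleton_iff, visitedVerts, witnessGraph,
    TEdge.Compat, esw, ewz]

theorem isPath_esw : IsPath witnessGraph 0 3 [esw] := by
  simp [IsPath, isWalk_singleton_iff, visitedVerts, witnessGraph, esw]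

theorem isPath_esu_euw : IsPath witnessGraph 0 3 [esu, euw] := by
  simp [IsPath, isWalk_cons_cons_iff, isWalk_singleton_iff, visitedVerts, witnessGraph,
    TEdge.Compat, esu, euw]

variable {s z : ℕ} {e f : TEdge ℕ} {P : List (TEdge ℕ)}

theorem pair_of_isWalk_cons_cons (h : IsWalk witnessGraph s z (e :: f :: P)) :
    (e = esu ∧ f = euw ∨ e = euw ∧ f = ewz ∨ e = esw ∧ f = ewz ∨ e = esv ∧ f = evw) ∧
      IsWalk witnessGraph f.src z (f :: P) := by
  obtain ⟨he, -, hef, hf⟩ := isWalk_cons_cons_iff.1 h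
  exact ⟨(compat_iff he ((isWalk_iff.1 hf).2.1 f List.mem_cons_self)).1 hef, hf⟩

theorem tail_eq_nil_of_isWalk_ewz_cons (h : IsWalk witnessGraph s 4 (ewz :: P)) : P = [] := by
  rcases P with _ | ⟨f, Q⟩
  · rfl
  · simpa [ewz, esu, euw, esw, esv] using (pair_of_isWalk_cons_cons h).1

theorem not_isWalk_evw_cons : ¬ IsWalk witnessGraph s 4 (evw :: P) := by
  intro h
  rcases P with _ | ⟨f, Q⟩
  · simpa [evw] using (isWalk_singleton_iff.1 h).2.2
  · simpa [evw, esu, euw, esw, esv] using (pair_of_isWalk_cons_cons h).1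

theorem tail_eq_ewz_of_isWalk_cons (he : e = euw ∨ e = esw) (h : IsWalk witnessGraph s 4 (e :: P)) :
    P = [ewz] := by
  rcases P with _ | ⟨f, Q⟩
  · rcases he with rfl | rfl <;> simpa [euw, esw] using (isWalk_singleton_iff.1 h).2.2
  · obtain ⟨hef, hf⟩ := pair_of_isWalk_cons_cons h
    have hfz : f = ewz := by
      rcases he with rfl | rfl <;> simpa [euw, esw, esu, esv, ewz] using hef
    subst hfz
    rw [tail_eq_nil_of_isWalk_ewz_cons hf]

theorem not_isWalk_esv_cons : ¬ IsWalk witnessGraph s 4 (esv :: P) := by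
  intro h
  rcases P with _ | ⟨f, Q⟩
  · simpa [esv] using (isWalk_singleton_iff.1 h).2.2
  · obtain ⟨hef, hf⟩ := pair_of_isWalk_cons_cons h
    have hfv : f = evw := by simpa [esv, esu, euw, esw, evw] using hef
    subst hfv
    exact not_isWalk_evw_cons hf

theorem tail_eq_of_isWalk_esu_cons (h : IsWalk witnessGraph s 4 (esu :: P)) : P = [euw, ewz] := by
  rcases P with _ | ⟨f, Q⟩
  · simpa [esu] using (isWalk_singleton_iff.1 h).2.2
  · obtain ⟨hef, hf⟩ := pair_of_isWalk_cons_cons h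
    have hfw : f = euw := by simpa [esu, euw, esw, esv] using hef
    subst hfw
    rw [tail_eq_ewz_of_isWalk_cons (.inl rfl) hf]

theorem eq_of_isWalk (h : IsWalk witnessGraph 0 4 P) :
    P = [esw, ewz] ∨ P = [esu, euw, ewz] := by
  rcases P with _ | ⟨e, Q⟩
  · exact absurd rfl (isWalk_iff.1 h).1
  have he : e ∈ witnessGraph := (isWalk_iff.1 h).2.1 e List.mem_cons_self
  have hs : e.src = 0 := (isWalk_iff.1 h).2.2.2.1 e rfl
  simp only [witnessGraph, Set.mem_insert_iff, Set.mem_singleton_iff] at he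
  rcases he with rfl | rfl | rfl | rfl | rfl | rfl
  · exact .inr (by rw [tail_eq_of_isWalk_esu_cons h])
  · simp [euw] at hs
  · exact .inl (by rw [tail_eq_ewz_of_isWalk_cons (.inr rfl) h])
  · exact absurd h not_isWalk_esv_cons
  · simp [evw] at hs
  · simp [ewz] at hs

end witnessGraph

/-- a prefix of an efficient temporal path need not be efficient:
there is a temporal graph with an (s,z)-path P* efficient w.r.t. both
(arrival, cost) and (duration, cost), whose prefix P¹ ending at w is not
efficient w.r.t. (arrival, cost) among (s,w)-paths. -/
theorem stmt11 : ∃ (E : Set (TEdge ℕ)) (s w z : ℕ)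
    (Pstar P1 R : List (TEdge ℕ)),
    IsPath E s z Pstar ∧
    EfficientIn {Q | IsPath E s z Q} warr Pstar ∧
    EfficientIn {Q | IsPath E s z Q} wdur Pstar ∧
    Pstar = P1 ++ R ∧ IsPath E s w P1 ∧
    ¬ EfficientIn {Q | IsPath E s w Q} warr P1 := by
  refine ⟨witnessGraph, 0, 3, 4, [esw, ewz], [esw], [ewz], witnessGraph.isPath_esw_ewz, ?_, ?_,
    rfl, witnessGraph.isPath_esw, fun h => h.2 _ witnessGraph.isPath_esu_euw (.inr ⟨?_, ?_⟩)⟩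
  · refine efficientIn_of_forall_le witnessGraph.isPath_esw_ewz fun Q hQ => ?_
    rcases witnessGraph.eq_of_isWalk hQ.1 with rfl | rfl <;>
      norm_num [wcost, warr, esu, euw, esw, ewz]
  · refine efficientIn_of_forall_le witnessGraph.isPath_esw_ewz fun Q hQ => ?_
    rcases witnessGraph.eq_of_isWalk hQ.1 with rfl | rfl <;>
      norm_num [wcost, wdur, warr, wstart, esu, euw, esw, ewz]
  · norm_num [wcost, esu, euw, esw]
  · norm_num [warr, esu, euw, esw]
end
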